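/- arXiv:math/0512621 — 4 statements merged into one kernel-verified Lean document; each statement's English description precedes it below -/
import Mathlib

section
/- The representation ρ_n = ((C^{n+1}, C^n), (R, R̄)) of the Kronecker quiver, where R is the n×(n+1) matrix with R_{i,j} = δ_{i,j} and R̄ is the n×(n+1) matrix with R̄_{i,j} = δ_{i+1,j}, is indecomposable; its endomorphism ring consists only of scalar pairs (λ·id, λ·id). -/
noncomputable section

/-- A representation of the Kronecker quiver: two complex vector spaces and two
linear maps `f, g : V0 → V1`. -/
structure KronRep : Type 1 where
  V0 : Type
  V1 : Type
  [acg0 : AddCommGroup V0]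
  [acg1 : AddCommGroup V1]
  [mod0 : Module ℂ V0]
  [mod1 : Module ℂ V1]
  f : V0 →ₗ[ℂ] V1
  g : V0 →ₗ[ℂ] V1

attribute [instance] KronRep.acg0 KronRep.acg1 KronRep.mod0 KronRep.mod1

/-- Isomorphism of Kronecker quiver representations. -/
def KronRep.Iso (M N : KronRep) : Prop :=
  ∃ (e0 : M.V0 ≃ₗ[ℂ] N.V0) (e1 : M.V1 ≃ₗ[ℂ] N.V1),
    (∀ x, e1 (M.f x) = N.f (e0 x)) ∧ (∀ x, e1 (M.g x) = N.g (e0 x))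

/-- Direct sum of two Kronecker quiver representations. -/
def KronRep.prod (M N : KronRep) : KronRep where
  V0 := M.V0 × N.V0
  V1 := M.V1 × N.V1
  f := M.f.prodMap N.f
  g := M.g.prodMap N.g

/-- The zero representation. -/
def KronRep.IsZero (M : KronRep) : Prop :=
  (∀ x : M.V0, x = 0) ∧ (∀ x : M.V1, x = 0)

/-- A representation is indecomposable if it is nonzero and any direct sum
decomposition has a zero summand. -/
def KronRep.Indecomposable (M : KronRep) : Prop :=
  ¬ M.IsZero ∧ ∀ N P : KronRep, M.Iso (N.prod P) → N.IsZero ∨ P.IsZero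

/-- The representation `((ℂ, ℂ), (r, r̄))` given by a pair of scalars. -/
def scalarRep (r rb : ℂ) : KronRep where
  V0 := ℂ
  V1 := ℂ
  f := r • LinearMap.id
  g := rb • LinearMap.id

/-- The truncation map `R(x_1,...,x_{n+1}) = (x_1,...,x_n)`. -/
def Rtrunc (n : ℕ) : (Fin (n + 1) → ℂ) →ₗ[ℂ] (Fin n → ℂ) :=
  LinearMap.funLeft ℂ ℂ Fin.castSucc

/-- The shift map `R̄(x_1,...,x_{n+1}) = (x_2,...,x_{n+1})`. -/
def Rshift (n : ℕ) : (Fin (n + 1) → ℂ) →ₗ[ℂ] (Fin n → ℂ) :=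
  LinearMap.funLeft ℂ ℂ Fin.succ

/-- The representation `ρ_n = ((ℂ^{n+1}, ℂ^n), (R, R̄))` of the Kronecker quiver. -/
def rhoRep (n : ℕ) : KronRep where
  V0 := Fin (n + 1) → ℂ
  V1 := Fin n → ℂ
  f := Rtrunc n
  g := Rshift n

/-! For an endomorphism `(φ0, φ1)` of `ρ_n`, commuting with `R` and with `R̄` says that the matrix
of `φ1` is both the upper-left and the lower-right `n × n` block of the matrix of `φ0`, so the
latter is Toeplitz; moreover `R e_{n+1} = 0` and `R̄ e_1 = 0` kill the off-diagonal entries of its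
last and first columns, and together these force it to be scalar. A representation with only
scalar endomorphisms is indecomposable: the projection of `N ⊕ P` onto `N` is an endomorphism,
and it is the scalar `c` only if `N = 0` (when `c = 0`) or `P = 0` (when `c ≠ 0`). -/

namespace KronRep

def IsHom (M N : KronRep) (φ0 : M.V0 →ₗ[ℂ] N.V0) (φ1 : M.V1 →ₗ[ℂ] N.V1) : Prop :=
  (∀ x, φ1 (M.f x) = N.f (φ0 x)) ∧ (∀ x, φ1 (M.g x) = N.g (φ0 x))

def HasScalarEnds (M : KronRep) : Prop :=
  ∀ φ0 φ1, M.IsHom M φ0 φ1 → ∃ c : ℂ, φ0 = c • LinearMap.id ∧ φ1 = c • LinearMap.id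

variable {M N P : KronRep}

theorem IsHom.comp {φ0 : M.V0 →ₗ[ℂ] N.V0} {φ1 : M.V1 →ₗ[ℂ] N.V1}
    {ψ0 : N.V0 →ₗ[ℂ] P.V0} {ψ1 : N.V1 →ₗ[ℂ] P.V1}
    (hψ : N.IsHom P ψ0 ψ1) (hφ : M.IsHom N φ0 φ1) : M.IsHom P (ψ0 ∘ₗ φ0) (ψ1 ∘ₗ φ1) :=
  ⟨fun x => by simp [hφ.1, hψ.1], fun x => by simp [hφ.2, hψ.2]⟩

theorem IsHom.symm {e0 : M.V0 ≃ₗ[ℂ] N.V0} {e1 : M.V1 ≃ₗ[ℂ] N.V1}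
    (he : M.IsHom N e0 e1) : N.IsHom M e0.symm e1.symm := by
  constructor <;> intro y <;> apply e1.injective
  · simpa using (he.1 (e0.symm y)).symm
  · simpa using (he.2 (e0.symm y)).symm

theorem HasScalarEnds.of_iso (hM : M.HasScalarEnds) (e : M.Iso N) : N.HasScalarEnds := by
  obtain ⟨e0, e1, hf, hg⟩ := e
  have he : M.IsHom N e0 e1 := ⟨hf, hg⟩
  intro ψ0 ψ1 hψ
  obtain ⟨c, hc0, hc1⟩ :=
    hM _ _ (he.symm.comp (hψ.comp he) : M.IsHom M (e0.symm ∘ₗ ψ0 ∘ₗ e0) (e1.symm ∘ₗ ψ1 ∘ₗ e1))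
  refine ⟨c, LinearMap.ext fun y => ?_, LinearMap.ext fun y => ?_⟩
  · simpa using congr(e0 ($hc0 (e0.symm y)))
  · simpa using congr(e1 ($hc1 (e1.symm y)))

theorem isHom_inl_comp_fst :
    (N.prod P).IsHom (N.prod P) (.inl ℂ _ _ ∘ₗ .fst ℂ _ _) (.inl ℂ _ _ ∘ₗ .fst ℂ _ _) :=
  ⟨fun _ => Prod.ext rfl (map_zero P.f).symm, fun _ => Prod.ext rfl (map_zero P.g).symm⟩

theorem isZero_or_isZero_of_hasScalarEnds_prod (h : (N.prod P).HasScalarEnds) :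
    N.IsZero ∨ P.IsZero := by
  obtain ⟨c, hc0, hc1⟩ := h _ _ isHom_inl_comp_fst
  by_cases hc : c = 0
  · subst hc
    refine .inl ⟨fun a => ?_, fun a => ?_⟩
    · simpa using (congr(Prod.fst ($hc0 (a, 0))) : a = (0 : ℂ) • a)
    · simpa using (congr(Prod.fst ($hc1 (a, 0))) : a = (0 : ℂ) • a)
  · refine .inr ⟨fun b => ?_, fun b => ?_⟩
    · simpa [hc, eq_comm] using (congr(Prod.snd ($hc0 (0, b))) : 0 = c • b)
    · simpa [hc, eq_comm] using (congr(Prod.snd ($hc1 (0, b))) : 0 = c • b)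

theorem indecomposable_of_hasScalarEnds (h0 : ¬ M.IsZero) (h : M.HasScalarEnds) :
    M.Indecomposable :=
  ⟨h0, fun _ _ e => isZero_or_isZero_of_hasScalarEnds_prod (h.of_iso e)⟩

end KronRep

namespace Matrix

variable {α : Type*} {n : ℕ} {A : Matrix (Fin (n + 1)) (Fin (n + 1)) α}

theorem apply_self_eq_apply_zero_zero
    (hA : ∀ i j : Fin n, A i.castSucc j.castSucc = A i.succ j.succ) (i : Fin (n + 1)) :
    A i i = A 0 0 := by
  induction i using Fin.induction with
  | zero => rfl
  | succ i ih => rw [← hA, ih]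

theorem apply_eq_zero_of_lt [Zero α]
    (hA : ∀ i j : Fin n, A i.castSucc j.castSucc = A i.succ j.succ)
    (h0 : ∀ i : Fin n, A i.succ 0 = 0) {i j : Fin (n + 1)} (hij : j < i) : A i j = 0 := by
  induction j using Fin.induction generalizing i with
  | zero =>
    obtain ⟨i, rfl⟩ := Fin.exists_succ_eq.mpr hij.ne'
    exact h0 i
  | succ j ih =>
    obtain ⟨i, rfl⟩ := Fin.exists_succ_eq.mpr ((Fin.succ_pos j).trans hij).ne'
    rw [← hA]
    exact ih (Fin.castSucc_lt_castSucc_iff.mpr (Fin.succ_lt_succ_iff.mp hij))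

theorem eq_diagonal_of_toeplitz [Zero α]
    (hA : ∀ i j : Fin n, A i.castSucc j.castSucc = A i.succ j.succ)
    (h0 : ∀ i : Fin n, A i.succ 0 = 0) (hlast : ∀ i : Fin n, A i.castSucc (Fin.last n) = 0) :
    A = diagonal fun _ => A 0 0 := by
  have hrev : ∀ i j : Fin n, A (Fin.rev i.castSucc) (Fin.rev j.castSucc) =
      A (Fin.rev i.succ) (Fin.rev j.succ) := by
    intro i j
    simp only [Fin.rev_castSucc, Fin.rev_succ, hA]
  ext i j
  rcases lt_trichotomy i j with h | rfl | h
  · rw [diagonal_apply_ne _ h.ne]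
    simpa using apply_eq_zero_of_lt (A := A.submatrix Fin.rev Fin.rev) hrev
      (fun i => by simpa [Fin.rev_succ] using hlast i.rev) (Fin.rev_lt_rev.mpr h)
  · rw [diagonal_apply_eq, apply_self_eq_apply_zero_zero hA]
  · rw [diagonal_apply_ne _ h.ne']
    exact apply_eq_zero_of_lt hA h0 h

end Matrix

theorem LinearMap.eq_smul_id_of_toMatrix'_eq_diagonal {R ι : Type*} [CommRing R] [Fintype ι]
    [DecidableEq ι] {φ : (ι → R) →ₗ[R] (ι → R)} {c : R}
    (h : LinearMap.toMatrix' φ = Matrix.diagonal fun _ => c) : φ = c • LinearMap.id :=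
  LinearMap.toMatrix'.injective <| by
    rw [h, map_smul, LinearMap.toMatrix'_id, Matrix.smul_one_eq_diagonal]

section Rho

variable {n : ℕ}

theorem Rtrunc_apply (v : Fin (n + 1) → ℂ) (i : Fin n) : Rtrunc n v i = v i.castSucc := rfl

theorem Rshift_apply (v : Fin (n + 1) → ℂ) (i : Fin n) : Rshift n v i = v i.succ := rfl

theorem Rtrunc_single_castSucc (j : Fin n) (c : ℂ) :
    Rtrunc n (Pi.single j.castSucc c) = Pi.single j c := by
  ext i
  simp [Rtrunc_apply, Pi.single_apply]

theorem Rshift_single_succ (j : Fin n) (c : ℂ) :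
    Rshift n (Pi.single j.succ c) = Pi.single j c := by
  ext i
  simp [Rshift_apply, Pi.single_apply]

theorem Rtrunc_single_last (c : ℂ) : Rtrunc n (Pi.single (Fin.last n) c) = 0 := by
  ext i
  simp [Rtrunc_apply, (Fin.castSucc_lt_last i).ne]

theorem Rshift_single_zero (c : ℂ) : Rshift n (Pi.single 0 c) = 0 := by
  ext i
  simp [Rshift_apply]

theorem rhoRep_not_isZero : ¬ (rhoRep n).IsZero :=
  fun h => one_ne_zero (congrFun (h.1 fun _ => 1) 0)

variable {φ0 : (Fin (n + 1) → ℂ) →ₗ[ℂ] (Fin (n + 1) → ℂ)} {φ1 : (Fin n → ℂ) →ₗ[ℂ] (Fin n → ℂ)}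

theorem toMatrix'_eq_submatrix_castSucc_of_Rtrunc (hf : ∀ v, φ1 (Rtrunc n v) = Rtrunc n (φ0 v)) :
    LinearMap.toMatrix' φ1 = (LinearMap.toMatrix' φ0).submatrix Fin.castSucc Fin.castSucc := by
  ext i j
  simpa [Rtrunc_single_castSucc, Rtrunc_apply] using congrFun (hf (Pi.single j.castSucc 1)) i

theorem toMatrix'_eq_submatrix_succ_of_Rshift (hg : ∀ v, φ1 (Rshift n v) = Rshift n (φ0 v)) :
    LinearMap.toMatrix' φ1 = (LinearMap.toMatrix' φ0).submatrix Fin.succ Fin.succ := by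
  ext i j
  simpa [Rshift_single_succ, Rshift_apply] using congrFun (hg (Pi.single j.succ 1)) i

theorem toMatrix'_apply_castSucc_last_of_Rtrunc (hf : ∀ v, φ1 (Rtrunc n v) = Rtrunc n (φ0 v))
    (i : Fin n) :
    LinearMap.toMatrix' φ0 i.castSucc (Fin.last n) = 0 := by
  simpa [Rtrunc_single_last, Rtrunc_apply] using
    (congrFun (hf (Pi.single (Fin.last n) 1)) i).symm

theorem toMatrix'_apply_succ_zero_of_Rshift (hg : ∀ v, φ1 (Rshift n v) = Rshift n (φ0 v))
    (i : Fin n) :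
    LinearMap.toMatrix' φ0 i.succ 0 = 0 := by
  simpa [Rshift_single_zero, Rshift_apply] using (congrFun (hg (Pi.single 0 1)) i).symm

theorem exists_eq_smul_id_of_commute_Rtrunc_Rshift
    (hf : ∀ v, φ1 (Rtrunc n v) = Rtrunc n (φ0 v)) (hg : ∀ v, φ1 (Rshift n v) = Rshift n (φ0 v)) :
    ∃ c : ℂ, φ0 = c • LinearMap.id ∧ φ1 = c • LinearMap.id := by
  have hT : ∀ i j : Fin n, LinearMap.toMatrix' φ0 i.castSucc j.castSucc =
      LinearMap.toMatrix' φ0 i.succ j.succ :=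
    congrFun₂ <| (toMatrix'_eq_submatrix_castSucc_of_Rtrunc hf).symm.trans
      (toMatrix'_eq_submatrix_succ_of_Rshift hg)
  have hdiag := Matrix.eq_diagonal_of_toeplitz hT (toMatrix'_apply_succ_zero_of_Rshift hg)
    (toMatrix'_apply_castSucc_last_of_Rtrunc hf)
  refine ⟨_, LinearMap.eq_smul_id_of_toMatrix'_eq_diagonal hdiag,
    LinearMap.eq_smul_id_of_toMatrix'_eq_diagonal ?_⟩
  rw [toMatrix'_eq_submatrix_castSucc_of_Rtrunc hf, hdiag,
    Matrix.submatrix_diagonal _ _ (Fin.castSucc_injective n)]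
  rfl

theorem rhoRep_hasScalarEnds : (rhoRep n).HasScalarEnds :=
  fun _ _ h => exists_eq_smul_id_of_commute_Rtrunc_Rshift h.1 h.2

end Rho

/-- `ρ_n` is indecomposable and its endomorphism ring consists
only of the scalar pairs `(λ·id, λ·id)`. -/
theorem rhoRep_indecomposable (n : ℕ) :
    (rhoRep n).Indecomposable ∧
    ∀ (φ0 : (Fin (n + 1) → ℂ) →ₗ[ℂ] (Fin (n + 1) → ℂ))
      (φ1 : (Fin n → ℂ) →ₗ[ℂ] (Fin n → ℂ)),
      (∀ v, φ1 (Rtrunc n v) = Rtrunc n (φ0 v)) →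
      (∀ v, φ1 (Rshift n v) = Rshift n (φ0 v)) →
      ∃ c : ℂ, φ0 = c • LinearMap.id ∧ φ1 = c • LinearMap.id :=
  ⟨KronRep.indecomposable_of_hasScalarEnds rhoRep_not_isZero rhoRep_hasScalarEnds,
    fun _ _ => exists_eq_smul_id_of_commute_Rtrunc_Rshift⟩
end
end

section
/- In the associative graded algebra generated over C by degree-1 elements x^+_1, x^+_2, x^-_1, x^-_2 with relations x^+_i x^+_j = 0, x^-_i x^-_j = 0 (all i,j ∈ {1,2}), x^+_1 x^-_2 + x^+_2 x^-_1 = 0, and x^-_1 x^+_2 + x^-_2 x^+_1 = 0, the degree-n homogeneous component has dimension 2(n+1) for every n ≥ 1 (and dimension 1 in degree 0 for each of the two idempotent components, i.e., total dimension 2 in degree 0). -/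
noncomputable section

/-- Generators of the Ext algebra: two vertex idempotents `e v` and the
degree-one generators `x^+_i` (`xp i`) and `x^-_i` (`xm i`), `i ∈ {1,2}`. -/
inductive ExtGen | e (v : Bool) | xp (i : Fin 2) | xm (i : Fin 2)

open FreeAlgebra in
/-- Defining relations: the `e v` are orthogonal idempotents summing to `1`,
`x^+` are arrows from vertex `false` to `true` and `x^-` arrows back, products
of two `x^+`'s and of two `x^-`'s vanish, and the two anticommutation relations
`x^+_1x^-_2 + x^+_2x^-_1 = 0`, `x^-_1x^+_2 + x^-_2x^+_1 = 0` hold. -/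
inductive ExtRel : FreeAlgebra ℂ ExtGen → FreeAlgebra ℂ ExtGen → Prop
  | idem (v) : ExtRel (ι ℂ (ExtGen.e v) * ι ℂ (ExtGen.e v)) (ι ℂ (ExtGen.e v))
  | orth (v w) (h : v ≠ w) : ExtRel (ι ℂ (ExtGen.e v) * ι ℂ (ExtGen.e w)) 0
  | sum : ExtRel (ι ℂ (ExtGen.e false) + ι ℂ (ExtGen.e true)) 1
  | xpL (i) : ExtRel (ι ℂ (ExtGen.e true) * ι ℂ (ExtGen.xp i)) (ι ℂ (ExtGen.xp i))
  | xpR (i) : ExtRel (ι ℂ (ExtGen.xp i) * ι ℂ (ExtGen.e false)) (ι ℂ (ExtGen.xp i))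
  | xmL (i) : ExtRel (ι ℂ (ExtGen.e false) * ι ℂ (ExtGen.xm i)) (ι ℂ (ExtGen.xm i))
  | xmR (i) : ExtRel (ι ℂ (ExtGen.xm i) * ι ℂ (ExtGen.e true)) (ι ℂ (ExtGen.xm i))
  | quadP (i j) : ExtRel (ι ℂ (ExtGen.xp i) * ι ℂ (ExtGen.xp j)) 0
  | quadM (i j) : ExtRel (ι ℂ (ExtGen.xm i) * ι ℂ (ExtGen.xm j)) 0
  | antiP : ExtRel (ι ℂ (ExtGen.xp 0) * ι ℂ (ExtGen.xm 1) +
      ι ℂ (ExtGen.xp 1) * ι ℂ (ExtGen.xm 0)) 0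
  | antiM : ExtRel (ι ℂ (ExtGen.xm 0) * ι ℂ (ExtGen.xp 1) +
      ι ℂ (ExtGen.xm 1) * ι ℂ (ExtGen.xp 0)) 0

/-- The Ext algebra `Ext^•(X^+_s ⊕ X^-_{p-s}, X^+_s ⊕ X^-_{p-s})`. -/
abbrev ExtAlg : Type := RingQuot ExtRel

/-- Image of a generator in the Ext algebra. -/
def extGen (x : ExtGen) : ExtAlg := RingQuot.mkAlgHom ℂ ExtRel (FreeAlgebra.ι ℂ x)

/-- The letters of degree-one words: `inl i ↦ x^+_i`, `inr i ↦ x^-_i`. -/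
def extLetter : Fin 2 ⊕ Fin 2 → ExtAlg
  | Sum.inl i => extGen (ExtGen.xp i)
  | Sum.inr i => extGen (ExtGen.xm i)

/-- The degree-`n` homogeneous component (`n ≥ 1`): the span of length-`n`
words in the degree-one generators. -/
def extDeg (n : ℕ) : Submodule ℂ ExtAlg :=
  Submodule.span ℂ
    {u | ∃ l : List (Fin 2 ⊕ Fin 2), l.length = n ∧ u = (l.map extLetter).prod}

/-- The degree-`0` component: the span of the two idempotents. -/
def extDeg0 : Submodule ℂ ExtAlg :=
  Submodule.span ℂ {extGen (ExtGen.e false), extGen (ExtGen.e true)}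

/-!
Since `x^±_i x^±_j = 0`, a nonzero word alternates in sign, and the anticommutation relations
move every `x_1` to the left of every `x_0` at the cost of a sign. Hence degree `n` is spanned by
the `2(n+1)` alternating words with index sequence `1^k 0^(n-k)` and either starting sign. They are
linearly independent because in the representation by `2 × 2` matrices over `ℂ[X]` with
`x^+_i ↦ X^i E_{+-}` and `x^-_i ↦ (-X)^i E_{-+}` such a word maps to `±X^k` in the row of its
starting sign.
-/

open Polynomial

theorem Matrix.linearIndependent_single_of_linearIndependent {R M m n ι : Type*} [Semiring R]
    [AddCommMonoid M] [Module R M] [DecidableEq m] [DecidableEq n] (c : m → n)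
    (v : m → ι → M) (hv : ∀ i, LinearIndependent R (v i)) :
    LinearIndependent R fun p : m × ι => Matrix.single p.1 (c p.1) (v p.1 p.2) := by
  have hrow (i : m) : LinearIndependent R (LinearMap.single R (fun _ : n => M) (c i) ∘ v i) :=
    (hv i).map_injOn _ (Pi.single_injective (M := fun _ : n => M) (c i)).injOn
  have := ((Pi.linearIndependent_single _ hrow).comp (Equiv.sigmaEquivProd m ι).symm
    (Equiv.injective _)).map_injOn (Matrix.ofLinearEquiv R).toLinearMap
    (Matrix.ofLinearEquiv R).injective.injOn
  convert this using 1
  funext ⟨i, k⟩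
  exact Matrix.single_eq_of_single_single i (c i) (v i k)

def signedLetter (t : Bool) (i : Fin 2) : Fin 2 ⊕ Fin 2 := cond t (.inl i) (.inr i)

theorem exists_signedLetter_eq (x : Fin 2 ⊕ Fin 2) : ∃ t i, signedLetter t i = x := by
  rcases x with i | i
  exacts [⟨true, i, rfl⟩, ⟨false, i, rfl⟩]

def altWord : Bool → List (Fin 2) → List (Fin 2 ⊕ Fin 2)
  | _, [] => []
  | t, i :: s => signedLetter t i :: altWord (!t) s

theorem length_altWord (t : Bool) (s : List (Fin 2)) : (altWord t s).length = s.length := by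
  induction s generalizing t <;> simp [altWord, *]

def altProd (t : Bool) (s : List (Fin 2)) : ExtAlg := ((altWord t s).map extLetter).prod

@[simp]
theorem altProd_nil (t : Bool) : altProd t [] = 1 := rfl

theorem altProd_cons (t : Bool) (i : Fin 2) (s : List (Fin 2)) :
    altProd t (i :: s) = extLetter (signedLetter t i) * altProd (!t) s := rfl

theorem extLetter_mul_extLetter_same_sign (t : Bool) (i j : Fin 2) :
    extLetter (signedLetter t i) * extLetter (signedLetter t j) = 0 := by
  cases t
  · simpa [extLetter, extGen, signedLetter] using RingQuot.mkAlgHom_rel ℂ (ExtRel.quadM i j)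
  · simpa [extLetter, extGen, signedLetter] using RingQuot.mkAlgHom_rel ℂ (ExtRel.quadP i j)

theorem extLetter_zero_mul_extLetter_one (t : Bool) :
    extLetter (signedLetter t 0) * extLetter (signedLetter (!t) 1) =
      (-1 : ℂ) • (extLetter (signedLetter t 1) * extLetter (signedLetter (!t) 0)) := by
  refine (eq_neg_of_add_eq_zero_left ?_).trans (neg_one_smul ℂ _).symm
  cases t
  · simpa [extLetter, extGen, signedLetter] using RingQuot.mkAlgHom_rel ℂ ExtRel.antiM
  · simpa [extLetter, extGen, signedLetter] using RingQuot.mkAlgHom_rel ℂ ExtRel.antiP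

theorem extLetter_zero_mul_altProd (t : Bool) (k : ℕ) (z : List (Fin 2)) :
    extLetter (signedLetter t 0) * altProd (!t) (List.replicate k 1 ++ z) =
      (-1 : ℂ) ^ k • altProd t (List.replicate k 1 ++ 0 :: z) := by
  induction k generalizing t with
  | zero => simp [altProd_cons]
  | succ k ih =>
    have ih' := ih (!t)
    rw [Bool.not_not] at ih'
    simp only [List.replicate_succ, List.cons_append, altProd_cons, Bool.not_not]
    rw [← mul_assoc, extLetter_zero_mul_extLetter_one, smul_mul_assoc, mul_assoc, ih',
      mul_smul_comm, smul_smul, pow_succ']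

def normalProd (t : Bool) (k m : ℕ) : ExtAlg :=
  altProd t (List.replicate k 1 ++ List.replicate m 0)

def normalFamily (n : ℕ) (p : Bool × Fin (n + 1)) : ExtAlg := normalProd p.1 p.2 (n - p.2)

theorem normalProd_mem_span {n k m : ℕ} (h : k + m = n) (t : Bool) :
    normalProd t k m ∈ Submodule.span ℂ (Set.range (normalFamily n)) :=
  Submodule.subset_span ⟨(t, ⟨k, by omega⟩), by simp [normalFamily, ← h]⟩

theorem extLetter_opposite_mul_normalProd_mem_span (t : Bool) (i : Fin 2) (k m : ℕ) :
    extLetter (signedLetter (!t) i) * normalProd t k m ∈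
      Submodule.span ℂ (Set.range (normalFamily (k + m + 1))) := by
  match i with
  | 0 =>
    have bubble := extLetter_zero_mul_altProd (!t) k (List.replicate m 0)
    rw [Bool.not_not, ← List.replicate_succ] at bubble
    rw [normalProd, bubble]
    exact Submodule.smul_mem _ _ (normalProd_mem_span (by omega) (!t))
  | 1 =>
    have cons := altProd_cons (!t) 1 (List.replicate k 1 ++ List.replicate m 0)
    rw [Bool.not_not, ← List.cons_append, ← List.replicate_succ] at cons
    rw [normalProd, ← cons]
    exact normalProd_mem_span (by omega) (!t)

theorem extLetter_mul_normalProd_mem_span (t t' : Bool) (i : Fin 2) (k m : ℕ) :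
    extLetter (signedLetter t' i) * normalProd t k m ∈
      Submodule.span ℂ (Set.range (normalFamily (k + m + 1))) := by
  rcases Bool.eq_or_eq_not t' t with rfl | rfl
  · obtain ⟨rfl, rfl⟩ | hkm := em (k = 0 ∧ m = 0)
    · simpa [normalProd] using extLetter_opposite_mul_normalProd_mem_span (!t') i 0 0
    · obtain ⟨j, s, hs⟩ := List.exists_cons_of_ne_nil
        (l := List.replicate k (1 : Fin 2) ++ List.replicate m 0) (by simpa using hkm)
      rw [normalProd, hs, altProd_cons, ← mul_assoc, extLetter_mul_extLetter_same_sign, zero_mul]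
      exact Submodule.zero_mem _
  · exact extLetter_opposite_mul_normalProd_mem_span t i k m

theorem extLetter_mul_mem_span (x : Fin 2 ⊕ Fin 2) {n : ℕ} {a : ExtAlg}
    (ha : a ∈ Submodule.span ℂ (Set.range (normalFamily n))) :
    extLetter x * a ∈ Submodule.span ℂ (Set.range (normalFamily (n + 1))) := by
  obtain ⟨t', i, rfl⟩ := exists_signedLetter_eq x
  induction ha using Submodule.span_induction with
  | mem _ hmem =>
    obtain ⟨⟨t, k⟩, rfl⟩ := hmem
    have := extLetter_mul_normalProd_mem_span t t' i k (n - k)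
    rwa [show k + (n - k) + 1 = n + 1 by omega] at this
  | zero => rw [mul_zero]; exact Submodule.zero_mem _
  | add _ _ _ _ hx hy => rw [mul_add]; exact Submodule.add_mem _ hx hy
  | smul a _ _ hx => rw [mul_smul_comm]; exact Submodule.smul_mem _ a hx

theorem listProd_mem_span_normalFamily (l : List (Fin 2 ⊕ Fin 2)) :
    (l.map extLetter).prod ∈ Submodule.span ℂ (Set.range (normalFamily l.length)) := by
  induction l with
  | nil => simpa [normalProd] using normalProd_mem_span (k := 0) (m := 0) rfl true
  | cons x l ih => exact extLetter_mul_mem_span x ih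

theorem extDeg_eq_span_normalFamily (n : ℕ) :
    extDeg n = Submodule.span ℂ (Set.range (normalFamily n)) := by
  apply le_antisymm
  · rw [extDeg, Submodule.span_le]
    rintro _ ⟨l, rfl, rfl⟩
    exact listProd_mem_span_normalFamily l
  · rw [Submodule.span_le]
    rintro _ ⟨⟨t, k⟩, rfl⟩
    refine Submodule.subset_span
      ⟨altWord t (List.replicate k 1 ++ List.replicate (n - k) 0), ?_, rfl⟩
    simp only [length_altWord, List.length_append, List.length_replicate]
    omega

open Matrix in
def extRep : ExtGen → Matrix Bool Bool ℂ[X]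
  | .e v => single v v 1
  | .xp i => single true false (X ^ (i : ℕ))
  | .xm i => single false true ((-X) ^ (i : ℕ))

theorem extRep_rel ⦃a b : FreeAlgebra ℂ ExtGen⦄ (h : ExtRel a b) :
    FreeAlgebra.lift ℂ extRep a = FreeAlgebra.lift ℂ extRep b := by
  cases h
  case sum => ext (_ | _) (_ | _) <;> simp [extRep]
  all_goals simp [extRep, Matrix.single_mul_single_same, Matrix.single_mul_single_of_ne,
    ← Matrix.single_add, *]

def extRepHom : ExtAlg →ₐ[ℂ] Matrix Bool Bool ℂ[X] :=
  RingQuot.liftAlgHom ℂ ⟨FreeAlgebra.lift ℂ extRep, extRep_rel⟩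

theorem extRepHom_extGen (g : ExtGen) : extRepHom (extGen g) = extRep g := by
  simp [extRepHom, extGen, RingQuot.liftAlgHom_mkAlgHom_apply]

theorem extRepHom_extLetter (t : Bool) (i : Fin 2) :
    ∃ ε : ℂˣ,
      extRepHom (extLetter (signedLetter t i)) = Matrix.single t (!t) (ε • X ^ (i : ℕ)) := by
  cases t
  · exact ⟨(-1) ^ (i : ℕ), by
      simp [signedLetter, extLetter, extRepHom_extGen, extRep, neg_pow (X : ℂ[X]),
        Units.smul_def, smul_eq_C_mul]⟩
  · exact ⟨1, by simp [signedLetter, extLetter, extRepHom_extGen, extRep]⟩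

theorem extRepHom_altProd_cons (t : Bool) (i : Fin 2) (s : List (Fin 2)) :
    ∃ ε : ℂˣ, extRepHom (altProd t (i :: s)) =
      Matrix.single t ((!·)^[s.length + 1] t) (ε • X ^ ((i :: s).map Fin.val).sum) := by
  induction s generalizing t i with
  | nil => simpa [altProd_cons] using extRepHom_extLetter t i
  | cons j s ih =>
    obtain ⟨ε, hε⟩ := extRepHom_extLetter t i
    obtain ⟨δ, hδ⟩ := ih (!t) j
    refine ⟨ε * δ, ?_⟩
    rw [altProd_cons, map_mul, hε, hδ, Matrix.single_mul_single_same,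
      List.length_cons, Function.iterate_succ_apply _ (s.length + 1)]
    simp only [List.map_cons, List.sum_cons, pow_add, Units.smul_def, Units.val_mul,
      smul_mul_smul_comm]

theorem extRepHom_normalFamily {n : ℕ} (hn : 1 ≤ n) (p : Bool × Fin (n + 1)) :
    ∃ ε : ℂˣ, extRepHom (normalFamily n p) =
      Matrix.single p.1 ((!·)^[n] p.1) (ε • X ^ (p.2 : ℕ)) := by
  obtain ⟨t, k⟩ := p
  have hlen : (List.replicate k 1 ++ List.replicate (n - k) 0 : List (Fin 2)).length = n := by
    simp only [List.length_append, List.length_replicate]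
    omega
  obtain ⟨j, s, hs⟩ := List.exists_cons_of_ne_nil (List.ne_nil_of_length_pos (hlen ▸ hn))
  obtain ⟨ε, hε⟩ := extRepHom_altProd_cons t j s
  have hsum : ((j :: s).map Fin.val).sum = k := by
    simp [← hs, List.sum_replicate]
  rw [hs, List.length_cons] at hlen
  exact ⟨ε, by rw [normalFamily, normalProd, hs, hε, hlen, hsum]⟩

theorem linearIndependent_normalFamily {n : ℕ} (hn : 1 ≤ n) :
    LinearIndependent ℂ (normalFamily n) := by
  refine LinearIndependent.of_comp extRepHom.toLinearMap ?_
  choose ε hε using extRepHom_normalFamily hn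
  have hpow : LinearIndependent ℂ fun k : Fin (n + 1) => (X : ℂ[X]) ^ (k : ℕ) := by
    simpa [X_pow_eq_monomial, Function.comp_def] using
      (basisMonomials ℂ).linearIndependent.comp _ Fin.val_injective
  rw [show ⇑extRepHom.toLinearMap ∘ normalFamily n = _ from funext hε]
  exact Matrix.linearIndependent_single_of_linearIndependent (fun t => (!·)^[n] t)
    (fun t k => ε (t, k) • (X : ℂ[X]) ^ (k : ℕ)) fun t => hpow.units_smul fun k => ε (t, k)

theorem linearIndependent_extGen_e : LinearIndependent ℂ fun v => extGen (ExtGen.e v) := by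
  refine LinearIndependent.of_comp extRepHom.toLinearMap ?_
  rw [show ⇑extRepHom.toLinearMap ∘ (fun v => extGen (ExtGen.e v)) =
      fun v => Matrix.single v v (1 : ℂ[X]) from
        funext fun v => by simp [extRepHom_extGen, extRep]]
  have hone : LinearIndependent ℂ fun _ : Unit => (1 : ℂ[X]) :=
    linearIndependent_unique_iff.mpr one_ne_zero
  exact (Matrix.linearIndependent_single_of_linearIndependent (fun v => v)
    (fun (_ : Bool) (_ : Unit) => (1 : ℂ[X])) fun _ => hone).comp (fun v => (v, ()))
    fun _ _ h => congrArg Prod.fst h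

/-- the degree-`n` component of the Ext algebra has dimension
`2(n+1)` for every `n ≥ 1`, and in degree `0` each of the two idempotent
components has dimension `1`, for a total dimension `2`. -/
theorem ext_algebra_dimensions :
    (∀ n : ℕ, 1 ≤ n → Module.finrank ℂ (extDeg n) = 2 * (n + 1)) ∧
    Module.finrank ℂ (Submodule.span ℂ {extGen (ExtGen.e false)}) = 1 ∧
    Module.finrank ℂ (Submodule.span ℂ {extGen (ExtGen.e true)}) = 1 ∧
    Module.finrank ℂ extDeg0 = 2 := by
  refine ⟨fun n hn => ?_, finrank_span_singleton (linearIndependent_extGen_e.ne_zero false),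
    finrank_span_singleton (linearIndependent_extGen_e.ne_zero true), ?_⟩
  · rw [extDeg_eq_span_normalFamily, finrank_span_eq_card (linearIndependent_normalFamily hn)]
    simp [mul_comm]
  · rw [extDeg0, ← Bool.range_eq fun v => extGen (ExtGen.e v),
      finrank_span_eq_card linearIndependent_extGen_e]
    simp
end
end

section
/- For p = 2 and q = i, the minimal polynomial of the Casimir element C = EF + (q^{-1}K + qK^{-1})/(q−q^{-1})^2 of U_i(sl2) divides Ψ_4(x) = (x − β_0)(x − β_2)(x − β_1)^2, where β_j = (i^j + i^{-j})/(i − i^{-1})^2 = (i^j + i^{-j})/(−4); i.e., Ψ_4(C) = 0 in U_i(sl2). -/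
noncomputable section

/-- `q = e^{iπ/p}`. -/
def qc (p : ℕ) : ℂ := Complex.exp (Complex.I * Real.pi / p)

/-- Generators of the restricted quantum group. -/
inductive UqGen | E | F | K

open FreeAlgebra in
/-- Defining relations of the restricted quantum group `U_q(sl2)` at `q = e^{iπ/p}`:
`E^p = F^p = 0`, `K^{2p} = 1`, `KE = q^2 EK`, `KF = q^{-2} FK`,
`EF - FE = (K - K^{-1})/(q - q^{-1})` (with `K^{-1} = K^{2p-1}`). -/
inductive UqRel (p : ℕ) : FreeAlgebra ℂ UqGen → FreeAlgebra ℂ UqGen → Prop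
  | Ep : UqRel p (ι ℂ UqGen.E ^ p) 0
  | Fp : UqRel p (ι ℂ UqGen.F ^ p) 0
  | K2p : UqRel p (ι ℂ UqGen.K ^ (2 * p)) 1
  | KE : UqRel p (ι ℂ UqGen.K * ι ℂ UqGen.E) ((qc p ^ 2) • (ι ℂ UqGen.E * ι ℂ UqGen.K))
  | KF : UqRel p (ι ℂ UqGen.K * ι ℂ UqGen.F) ((qc p ^ 2)⁻¹ • (ι ℂ UqGen.F * ι ℂ UqGen.K))
  | EF : UqRel p (ι ℂ UqGen.E * ι ℂ UqGen.F - ι ℂ UqGen.F * ι ℂ UqGen.E)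
      ((qc p - (qc p)⁻¹)⁻¹ • (ι ℂ UqGen.K - ι ℂ UqGen.K ^ (2 * p - 1)))

/-- The restricted quantum group `U_q(sl2)` at `q = e^{iπ/p}`. -/
abbrev Uq (p : ℕ) : Type := RingQuot (UqRel p)

/-- The generator `E` of `U_q(sl2)`. -/
def UqE (p : ℕ) : Uq p := RingQuot.mkAlgHom ℂ (UqRel p) (FreeAlgebra.ι ℂ UqGen.E)
/-- The generator `F` of `U_q(sl2)`. -/
def UqF (p : ℕ) : Uq p := RingQuot.mkAlgHom ℂ (UqRel p) (FreeAlgebra.ι ℂ UqGen.F)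
/-- The generator `K` of `U_q(sl2)`. -/
def UqK (p : ℕ) : Uq p := RingQuot.mkAlgHom ℂ (UqRel p) (FreeAlgebra.ι ℂ UqGen.K)

/-- The Casimir element of `U_i(sl2)` (`p = 2`, `q = i`):
`C = EF + (q^{-1}K + qK^{-1})/(q-q^{-1})²` with `K^{-1} = K³`. -/
def Casimir2 : Uq 2 :=
  UqE 2 * UqF 2 +
    ((qc 2 - (qc 2)⁻¹) ^ 2)⁻¹ • ((qc 2)⁻¹ • UqK 2 + qc 2 • UqK 2 ^ 3)


lemma qI : qc 2 = Complex.I := by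
  unfold qc
  have : Complex.I * (Real.pi : ℂ) / ((2:ℕ):ℂ) = ((Real.pi/2 : ℝ) : ℂ) * Complex.I := by
    push_cast; ring
  rw [this, Complex.exp_mul_I, ← Complex.ofReal_cos, ← Complex.ofReal_sin,
    Real.cos_pi_div_two, Real.sin_pi_div_two]
  simp

lemma uq_hE2 : UqE 2 * UqE 2 = 0 := by
  have := RingQuot.mkAlgHom_rel ℂ (UqRel.Ep (p := 2))
  simpa [UqE, map_pow, sq] using this

lemma uq_hF2 : UqF 2 * UqF 2 = 0 := by
  have := RingQuot.mkAlgHom_rel ℂ (UqRel.Fp (p := 2))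
  simpa [UqF, map_pow, sq] using this

lemma uq_hK4 : UqK 2 ^ 4 = 1 := by
  have := RingQuot.mkAlgHom_rel ℂ (UqRel.K2p (p := 2))
  simpa [UqK, map_pow] using this

lemma uq_hKE : UqK 2 * UqE 2 = -(UqE 2 * UqK 2) := by
  have := RingQuot.mkAlgHom_rel ℂ (UqRel.KE (p := 2))
  have hq : qc 2 ^ 2 = -1 := by rw [qI, Complex.I_sq]
  simp only [map_mul, map_smul, hq, neg_smul, one_smul] at this
  simpa [UqE, UqK] using this

lemma uq_hKF : UqK 2 * UqF 2 = -(UqF 2 * UqK 2) := by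
  have := RingQuot.mkAlgHom_rel ℂ (UqRel.KF (p := 2))
  have hq : (qc 2 ^ 2)⁻¹ = -1 := by rw [qI, Complex.I_sq]; norm_num
  simp only [map_mul, map_smul, hq, neg_smul, one_smul] at this
  simpa [UqF, UqK] using this

lemma uq_hEF : UqE 2 * UqF 2 - UqF 2 * UqE 2
    = -(Complex.I/2) • (UqK 2 - UqK 2 ^ 3) := by
  have := RingQuot.mkAlgHom_rel ℂ (UqRel.EF (p := 2))
  have hq : (qc 2 - (qc 2)⁻¹)⁻¹ = -(Complex.I/2) := by
    rw [qI, Complex.inv_I]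
    have : Complex.I - -Complex.I = 2 * Complex.I := by ring
    rw [this, mul_inv, Complex.inv_I]
    ring
  simp only [map_sub, map_mul, map_smul, map_pow, hq] at this
  simpa [UqE, UqF, UqK] using this

lemma aux {R : Type*} [Ring R] [Algebra ℂ R] (C : R)
    (hC4 : C ^ 2 * C ^ 2 = (4⁻¹:ℂ) • C ^ 2) :
    (C - ((1:ℂ)/2) • 1) * (C + ((1:ℂ)/2) • 1) * C ^ 2 = 0 := by
  have h1 : (C - ((1:ℂ)/2) • 1) * (C + ((1:ℂ)/2) • 1) = C * C - (4⁻¹:ℂ) • 1 := by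
    simp only [sub_mul, mul_add, add_mul, smul_mul_assoc, mul_smul_comm, smul_smul,
      mul_one, one_mul]
    match_scalars <;> norm_num
  rw [h1, sub_mul, smul_mul_assoc, one_mul, ← sq, hC4, sub_self]

open Complex in
theorem key {R : Type*} [Ring R] [Algebra ℂ R] (E F K : R)
    (hE2 : E * E = 0) (hF2 : F * F = 0) (hK4 : K ^ 4 = 1)
    (hKE : K * E = -(E * K)) (hKF : K * F = -(F * K))
    (hEF : E * F - F * E = -(Complex.I/2) • (K - K ^ 3)) :
    ((E*F + (I/4) • (K - K^3)) - ((1:ℂ)/2) • 1) *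
    ((E*F + (I/4) • (K - K^3)) + ((1:ℂ)/2) • 1) *
    ((E*F + (I/4) • (K - K^3)))^2 = 0 := by
  set A := K - K ^ 3 with hA
  have hK2E : K^2 * E = E * K^2 := by
    rw [sq, mul_assoc, hKE, mul_neg, ← mul_assoc, hKE, neg_mul, neg_neg, mul_assoc]
  have hK3E : K^3 * E = -(E * K^3) := by
    rw [pow_succ', mul_assoc, hK2E, ← mul_assoc, hKE, neg_mul, mul_assoc]
  have hK2F : K^2 * F = F * K^2 := by
    rw [sq, mul_assoc, hKF, mul_neg, ← mul_assoc, hKF, neg_mul, neg_neg, mul_assoc]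
  have hK3F : K^3 * F = -(F * K^3) := by
    rw [pow_succ', mul_assoc, hK2F, ← mul_assoc, hKF, neg_mul, mul_assoc]
  have hAE : A * E = -(E * A) := by
    rw [hA, sub_mul, hKE, hK3E, mul_sub]
    abel
  have hAF : A * F = -(F * A) := by
    rw [hA, sub_mul, hKF, hK3F, mul_sub]
    abel
  have hFE : F * E = E * F + (Complex.I/2) • A := by
    linear_combination (norm := module) -hEF
  have hA2 : A * A = (2:ℂ) • (K^2) - (2:ℂ) • 1 := by
    have expand : A * A = K^2 - K^4 - K^4 + K^2 * K^4 := by rw [hA]; noncomm_ring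
    rw [expand, hK4, mul_one]
    match_scalars <;> norm_num
  have hEFEF : (E*F) * (E*F) = -(Complex.I/2) • ((E*F) * A) := by
    calc (E*F) * (E*F) = E * ((F * E) * F) := by noncomm_ring
    _ = E * ((E * F + (Complex.I/2) • A) * F) := by rw [hFE]
    _ = (E * E) * (F * F) + (Complex.I/2) • (E * (A * F)) := by
        rw [add_mul, smul_mul_assoc, mul_add, mul_smul_comm]
        noncomm_ring
    _ = -(Complex.I/2) • ((E*F) * A) := by
        rw [hE2, hAF, zero_mul, zero_add, mul_neg, smul_neg, ← neg_smul, mul_assoc]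
  have hAEF : A * (E * F) = (E * F) * A := by
    calc A * (E * F) = (A * E) * F := by rw [mul_assoc]
    _ = -(E * (A * F)) := by rw [hAE, neg_mul, mul_assoc]
    _ = (E * F) * A := by rw [hAF, mul_neg, neg_neg, mul_assoc]
  have hC2 : (E*F + (Complex.I/4) • A) ^ 2 = (8:ℂ)⁻¹ • ((1:R) - K^2) := by
    have expand : (E*F + (Complex.I/4) • A) ^ 2
        = (E*F)*(E*F) + (Complex.I/4) • ((E*F)*A) + (Complex.I/4) • (A*(E*F))
          + (Complex.I/4 * (Complex.I/4)) • (A*A) := by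
      rw [sq, add_mul, mul_add, mul_add, smul_mul_assoc, smul_mul_assoc,
        mul_smul_comm, mul_smul_comm, smul_smul]
      module
    rw [expand, hEFEF, hAEF, hA2]
    match_scalars
    · ring
    · linear_combination (1/8 : ℂ) * Complex.I_sq
    · linear_combination (-1/8 : ℂ) * Complex.I_sq
  have hC4 : (E*F + (Complex.I/4) • A) ^ 2 * (E*F + (Complex.I/4) • A) ^ 2
      = (4⁻¹:ℂ) • (E*F + (Complex.I/4) • A) ^ 2 := by
    rw [hC2, smul_mul_assoc, mul_smul_comm, smul_smul]
    have expand : ((1:R) - K^2) * ((1:R) - K^2) = 1 - K^2 - K^2 + K^4 := by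
      noncomm_ring
    rw [expand, hK4]
    match_scalars <;> norm_num
  exact aux _ hC4

lemma hCas : Casimir2 = UqE 2 * UqF 2 + (Complex.I/4) • (UqK 2 - UqK 2 ^ 3) := by
  unfold Casimir2
  have h4 : ((Complex.I - Complex.I⁻¹) ^ 2)⁻¹ = -(1/4 : ℂ) := by
    rw [Complex.inv_I, sub_neg_eq_add, ← two_mul, mul_pow, Complex.I_sq]
    norm_num
  rw [qI, h4, Complex.inv_I]
  match_scalars <;> ring

/-- the minimal polynomial of the Casimir of `U_i(sl2)` divides
`Ψ_4(x) = (x − β_0)(x − β_2)(x − β_1)²` with `β_0 = −1/2, β_1 = 0, β_2 = 1/2`: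
that is, `(C − 1/2)(C + 1/2)C² = 0`. -/
theorem casimir_minimal_polynomial_p2 :
    (Casimir2 - ((1 : ℂ) / 2) • (1 : Uq 2)) *
      (Casimir2 + ((1 : ℂ) / 2) • (1 : Uq 2)) * Casimir2 ^ 2 = 0 := by
  rw [hCas]
  exact key (UqE 2) (UqF 2) (UqK 2) uq_hE2 uq_hF2 uq_hK4 uq_hKE uq_hKF uq_hEF
end
end

section
/- Let s with 1 ≤ s ≤ p−1, a = ±1. The 2p-dimensional module P^a_s with basis {a_n, b_n : 0 ≤ n ≤ s−1} ∪ {x_k, y_k : 0 ≤ k ≤ p−s−1} and the action given in the paper (K acts diagonally with K b_n = a q^{s−1−2n} b_n etc.; E b_n = a[n][s−n]b_{n−1} + a_{n−1} for 1 ≤ n ≤ s−1, E b_0 = x_{p−s−1}, E y_0 = a_{s−1}, F b_{s−1} = y_0, F x_{p−s−1} = a_0, and the remaining actions standard) is a well-defined U_q(sl2)-module: the operators satisfy all defining relations of U_q(sl2). -/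
noncomputable section

/-- The q-integer `[n] = (q^n - q^{-n})/(q - q^{-1})`. -/
def qint (p n : ℕ) : ℂ := (qc p ^ n - (qc p)⁻¹ ^ n) / (qc p - (qc p)⁻¹)

/-- Basis index of the projective module `P^a_s`:
`inl (inl n) ↦ a_n`, `inl (inr n) ↦ b_n` (`0 ≤ n ≤ s-1`),
`inr (inl k) ↦ x_k`, `inr (inr k) ↦ y_k` (`0 ≤ k ≤ p-s-1`). -/
abbrev PIdx (p s : ℕ) : Type := (Fin s ⊕ Fin s) ⊕ (Fin (p - s) ⊕ Fin (p - s))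

/-- Action of `K` on `P^a_s`: `K a_n = a q^{s-1-2n} a_n`, `K b_n = a q^{s-1-2n} b_n`,
`K x_k = -a q^{p-s-1-2k} x_k`, `K y_k = -a q^{p-s-1-2k} y_k`. -/
def PK (p s : ℕ) (a : ℂ) : Matrix (PIdx p s) (PIdx p s) ℂ :=
  Matrix.diagonal fun i =>
    match i with
    | Sum.inl (Sum.inl n) => a * qc p ^ ((s : ℤ) - 1 - 2 * (n : ℤ))
    | Sum.inl (Sum.inr n) => a * qc p ^ ((s : ℤ) - 1 - 2 * (n : ℤ))
    | Sum.inr (Sum.inl k) => -a * qc p ^ (((p - s : ℕ) : ℤ) - 1 - 2 * (k : ℤ))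
    | Sum.inr (Sum.inr k) => -a * qc p ^ (((p - s : ℕ) : ℤ) - 1 - 2 * (k : ℤ))

/-- The inverse of the action of `K` on `P^a_s`. -/
def PKinv (p s : ℕ) (a : ℂ) : Matrix (PIdx p s) (PIdx p s) ℂ :=
  Matrix.diagonal fun i =>
    match i with
    | Sum.inl (Sum.inl n) => (a * qc p ^ ((s : ℤ) - 1 - 2 * (n : ℤ)))⁻¹
    | Sum.inl (Sum.inr n) => (a * qc p ^ ((s : ℤ) - 1 - 2 * (n : ℤ)))⁻¹
    | Sum.inr (Sum.inl k) => (-a * qc p ^ (((p - s : ℕ) : ℤ) - 1 - 2 * (k : ℤ)))⁻¹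
    | Sum.inr (Sum.inr k) => (-a * qc p ^ (((p - s : ℕ) : ℤ) - 1 - 2 * (k : ℤ)))⁻¹

/-- Action of `E` on `P^a_s`: `E a_n = a[n][s-n]a_{n-1}` (`a_{-1} = 0`);
`E b_n = a[n][s-n]b_{n-1} + a_{n-1}` for `n ≥ 1`, `E b_0 = x_{p-s-1}`;
`E x_k = -a[k][p-s-k]x_{k-1}` (`x_{-1} = 0`);
`E y_k = -a[k][p-s-k]y_{k-1}` for `k ≥ 1`, `E y_0 = a_{s-1}`. -/
def PE (p s : ℕ) (a : ℂ) : Matrix (PIdx p s) (PIdx p s) ℂ :=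
  Matrix.of fun i j =>
    match i, j with
    | Sum.inl (Sum.inl m), Sum.inl (Sum.inl n) =>
        if (m : ℕ) + 1 = (n : ℕ) then a * qint p n * qint p (s - (n : ℕ)) else 0
    | Sum.inl (Sum.inr m), Sum.inl (Sum.inr n) =>
        if (m : ℕ) + 1 = (n : ℕ) then a * qint p n * qint p (s - (n : ℕ)) else 0
    | Sum.inl (Sum.inl m), Sum.inl (Sum.inr n) =>
        if (m : ℕ) + 1 = (n : ℕ) then 1 else 0
    | Sum.inr (Sum.inl k), Sum.inl (Sum.inr n) =>
        if (n : ℕ) = 0 ∧ (k : ℕ) = p - s - 1 then 1 else 0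
    | Sum.inr (Sum.inl m), Sum.inr (Sum.inl k) =>
        if (m : ℕ) + 1 = (k : ℕ) then -a * qint p k * qint p (p - s - (k : ℕ)) else 0
    | Sum.inr (Sum.inr m), Sum.inr (Sum.inr k) =>
        if (m : ℕ) + 1 = (k : ℕ) then -a * qint p k * qint p (p - s - (k : ℕ)) else 0
    | Sum.inl (Sum.inl m), Sum.inr (Sum.inr k) =>
        if (k : ℕ) = 0 ∧ (m : ℕ) = s - 1 then 1 else 0
    | _, _ => 0

/-- Action of `F` on `P^a_s`: `F a_n = a_{n+1}` (`a_s = 0`);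
`F b_n = b_{n+1}` for `n ≤ s-2`, `F b_{s-1} = y_0`;
`F x_k = x_{k+1}` for `k ≤ p-s-2`, `F x_{p-s-1} = a_0`;
`F y_k = y_{k+1}` (`y_{p-s} = 0`). -/
def PF (p s : ℕ) : Matrix (PIdx p s) (PIdx p s) ℂ :=
  Matrix.of fun i j =>
    match i, j with
    | Sum.inl (Sum.inl m), Sum.inl (Sum.inl n) =>
        if (m : ℕ) = (n : ℕ) + 1 then 1 else 0
    | Sum.inl (Sum.inr m), Sum.inl (Sum.inr n) =>
        if (m : ℕ) = (n : ℕ) + 1 then 1 else 0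
    | Sum.inr (Sum.inr k), Sum.inl (Sum.inr n) =>
        if (n : ℕ) = s - 1 ∧ (k : ℕ) = 0 then 1 else 0
    | Sum.inr (Sum.inl m), Sum.inr (Sum.inl k) =>
        if (m : ℕ) = (k : ℕ) + 1 then 1 else 0
    | Sum.inl (Sum.inl m), Sum.inr (Sum.inl k) =>
        if (k : ℕ) = p - s - 1 ∧ (m : ℕ) = 0 then 1 else 0
    | Sum.inr (Sum.inr m), Sum.inr (Sum.inr k) =>
        if (m : ℕ) = (k : ℕ) + 1 then 1 else 0
    | _, _ => 0

/-!
On `P^a_s`, `K` is diagonal with eigenvalue `a q ^ w` on each basis vector, where the sign on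
`x_k, y_k` is absorbed through `q ^ p = -1`; every nonzero entry of `E` (resp. `F`) raises
(resp. lowers) `w` by `2` modulo `2p`, which gives the conjugation relations, and `q ^ (2p) = 1`
gives `K ^ (2p) = 1`. Each of `E` and `F` strictly increases a grading with values below `p`, so
`E ^ p = F ^ p = 0`. Finally `[E, F]` is computed entrywise: on each of the four strings it is the
`U_q(sl2)` computation `[n+1][N-n-1] - [n][N-n] = [N-1-2n]`, and the gluing maps
`E y_0 = a_{s-1}`, `F b_{s-1} = y_0`, `E b_0 = x_{p-s-1}`, `F x_{p-s-1} = a_0` supply exactly the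
`a`-components of `E F b_n` and `F E b_n` missing at the two ends of the `b`-string, so that
these cancel.
-/

section QNumber

variable {K : Type*} [Field K]

def qNum (q : K) (z : ℤ) : K := (q ^ z - q ^ (-z)) / (q - q⁻¹)

@[simp]
lemma qNum_zero (q : K) : qNum q 0 = 0 := by simp [qNum]

lemma qNum_mul_qNum_sub (q : K) (x y : ℤ) :
    qNum q x * qNum q y - qNum q (x - 1) * qNum q (y + 1) = qNum q (y - x + 1) := by
  by_cases hd : q - q⁻¹ = 0
  · simp [qNum, hd]
  have hq : q ≠ 0 := by rintro rfl; simp at hd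
  have hd' : q ^ 2 - 1 ≠ 0 := by
    contrapose! hd
    field_simp
    linear_combination hd
  have hx : q ^ x ≠ 0 := zpow_ne_zero _ hq
  have hy : q ^ y ≠ 0 := zpow_ne_zero _ hq
  simp only [qNum, zpow_neg, zpow_add₀ hq, zpow_sub₀ hq, zpow_one]
  field_simp
  ring

lemma sub_inv_div_eq_mul_qNum (q : K) {c : K} (hc : c = 1 ∨ c = -1) (z : ℤ) :
    (c * q ^ z - (c * q ^ z)⁻¹) / (q - q⁻¹) = c * qNum q z := by
  have hc' : c⁻¹ = c := by rcases hc with rfl | rfl <;> norm_num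
  rw [mul_inv, hc', qNum, zpow_neg]
  ring

end QNumber

lemma qc_ne_zero (p : ℕ) : qc p ≠ 0 := Complex.exp_ne_zero _

lemma qc_pow_self {p : ℕ} (hp : p ≠ 0) : qc p ^ p = -1 := by
  rw [qc, ← Complex.exp_nat_mul, mul_div_cancel₀ _ (Nat.cast_ne_zero.mpr hp), mul_comm,
    Complex.exp_pi_mul_I]

lemma qc_pow_two_mul_self {p : ℕ} (hp : p ≠ 0) : qc p ^ (2 * p) = 1 := by
  rw [pow_mul', qc_pow_self hp]
  norm_num

lemma qc_zpow_eq_of_modEq {p : ℕ} (hp : p ≠ 0) {x y : ℤ} (h : x ≡ y [ZMOD 2 * p]) :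
    qc p ^ x = qc p ^ y := by
  obtain ⟨k, hk⟩ := h.dvd
  rw [show y = x + 2 * p * k by omega, zpow_add₀ (qc_ne_zero p), zpow_mul,
    show (2 * p : ℤ) = ((2 * p : ℕ) : ℤ) by push_cast; ring, zpow_natCast,
    qc_pow_two_mul_self hp, one_zpow, mul_one]

lemma neg_mul_qc_zpow {p : ℕ} (hp : p ≠ 0) (a : ℂ) (z : ℤ) :
    -a * qc p ^ z = a * qc p ^ (p + z) := by
  rw [zpow_add₀ (qc_ne_zero p), zpow_natCast, qc_pow_self hp]
  ring

lemma qint_eq_qNum (p n : ℕ) : qint p n = qNum (qc p) n := by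
  rw [qint, qNum, zpow_neg, zpow_natCast, inv_pow]

@[simp]
lemma qint_zero (p : ℕ) : qint p 0 = 0 := by simp [qint_eq_qNum]

lemma qNum_natCast_add_self {p : ℕ} (hp : p ≠ 0) (z : ℤ) :
    qNum (qc p) (p + z) = -qNum (qc p) z := by
  rw [qNum, qNum, neg_add, zpow_add₀ (qc_ne_zero p), zpow_add₀ (qc_ne_zero p), zpow_neg,
    zpow_natCast, qc_pow_self hp]
  ring

lemma raise_succ_sub_raise (p : ℕ) (c : ℂ) {N n : ℕ} (hn : n < N) :
    c * qint p (n + 1) * qint p (N - (n + 1)) - c * qint p n * qint p (N - n) =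
      c * qNum (qc p) (N - 1 - 2 * n) := by
  have key := qNum_mul_qNum_sub (qc p) (n + 1) (N - n - 1)
  simp only [add_sub_cancel_right, sub_add_cancel] at key
  simp only [qint_eq_qNum]
  push_cast [Nat.cast_sub (show n + 1 ≤ N from hn), Nat.cast_sub hn.le]
  rw [show (N : ℤ) - (n + 1) = N - n - 1 by ring,
    show (N : ℤ) - 1 - 2 * n = N - n - 1 - (n + 1) + 1 by ring]
  linear_combination c * key

/-- The `(m, n)` entry of `E F - F E` on one string `e_0, …, e_{N-1}` with
`E e_n = c [n][N-n] e_{n-1}` and `F e_n = e_{n+1}`. -/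
lemma raise_lower_commutator_apply (p : ℕ) (c : ℂ) {N : ℕ} (m n : Fin N) :
    ((if (n : ℕ) + 1 < N then
        if (m : ℕ) = n then c * qint p (n + 1) * qint p (N - (n + 1)) else 0 else 0) -
      if 0 < (m : ℕ) then
        if (m : ℕ) - 1 + 1 = n then c * qint p n * qint p (N - n) else 0 else 0) =
      if m = n then c * qNum (qc p) (N - 1 - 2 * m) else 0 := by
  have hm := m.isLt
  rcases eq_or_ne m n with rfl | hmn
  · simp only [↓reduceIte, ← raise_succ_sub_raise p c hm]
    congr 1
    · split_ifs
      · rfl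
      · rw [show N - (m + 1) = 0 by omega, qint_zero, mul_zero]
    · split_ifs
      · rfl
      · omega
      · rw [show (m : ℕ) = 0 by omega, qint_zero, mul_zero, zero_mul]
  · have hn := n.isLt
    have : (m : ℕ) ≠ n := Fin.val_ne_of_ne hmn
    split_ifs <;> first | omega | simp

namespace Fin

lemma sum_ite_val_eq {M : Type*} [AddCommMonoid M] {N : ℕ} (k : ℕ) (f : Fin N → M) :
    ∑ x : Fin N, (if (x : ℕ) = k then f x else 0) = if h : k < N then f ⟨k, h⟩ else 0 := by
  split_ifs with h
  · rw [Fintype.sum_eq_single ⟨k, h⟩ fun x hx => if_neg fun hk => hx (Fin.ext hk)]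
    simp
  · exact Finset.sum_eq_zero fun x _ => if_neg (by omega)

lemma sum_ite_val_eq_val_add_one {M : Type*} [AddCommMonoid M] {N : ℕ} (m : Fin N)
    (f : Fin N → M) :
    ∑ x : Fin N, (if (m : ℕ) = x + 1 then f x else 0) =
      if h : 0 < (m : ℕ) then f ⟨m - 1, by omega⟩ else 0 := by
  split_ifs with h
  · rw [Fintype.sum_eq_single ⟨m - 1, by omega⟩ fun x hx =>
      if_neg fun hk => hx (Fin.ext (by simp only; omega))]
    exact if_pos (by simp only; omega)
  · exact Finset.sum_eq_zero fun x _ => if_neg (by omega)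

end Fin

namespace Matrix

variable {ι : Type*} [Fintype ι] [DecidableEq ι]

lemma pow_eq_zero_of_weight_lt {R : Type*} [Semiring R] (M : Matrix ι ι R) (w : ι → ℕ)
    {N : ℕ} (hw : ∀ i, w i < N) (hM : ∀ i j, M i j ≠ 0 → w i < w j) : M ^ N = 0 := by
  have key : ∀ k i j, w j < w i + k → (M ^ k) i j = 0 := by
    intro k
    induction k with
    | zero =>
      intro i j h
      exact one_apply_ne fun hij => by subst hij; omega
    | succ k ih =>
      intro i j h
      rw [pow_succ', mul_apply]
      refine Finset.sum_eq_zero fun t _ => ?_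
      by_cases hMt : M i t = 0
      · rw [hMt, zero_mul]
      · rw [ih t j (by have := hM i t hMt; omega), mul_zero]
  ext i j
  exact key N i j (by have := hw j; omega)

lemma diagonal_mul_mul_diagonal_inv {K : Type*} [Field K] (d : ι → K) (M : Matrix ι ι K)
    (c : K) (hd : ∀ i, d i ≠ 0) (hM : ∀ i j, M i j ≠ 0 → d i = c * d j) :
    diagonal d * M * diagonal (fun i => (d i)⁻¹) = c • M := by
  ext i j
  rw [mul_diagonal, diagonal_mul, smul_apply, smul_eq_mul]
  by_cases h : M i j = 0
  · simp [h]
  · rw [hM i j h]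
    field_simp [hd j]

end Matrix

open Matrix

section ProjectiveModule

variable {p s : ℕ} {a : ℂ}

def kExponent (p s : ℕ) : PIdx p s → ℤ
  | Sum.inl (Sum.inl n) => s - 1 - 2 * n
  | Sum.inl (Sum.inr n) => s - 1 - 2 * n
  | Sum.inr (Sum.inl k) => p + ((p - s : ℕ) - 1 - 2 * k)
  | Sum.inr (Sum.inr k) => p + ((p - s : ℕ) - 1 - 2 * k)

lemma PK_eq_diagonal (hp : p ≠ 0) :
    PK p s a = diagonal fun i => a * qc p ^ kExponent p s i := by
  rw [PK]
  congr 1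
  ext ((n | n) | (k | k)) <;> simp only [kExponent, neg_mul_qc_zpow hp]

lemma PKinv_eq_diagonal (hp : p ≠ 0) :
    PKinv p s a = diagonal fun i => (a * qc p ^ kExponent p s i)⁻¹ := by
  rw [PKinv]
  congr 1
  ext ((n | n) | (k | k)) <;> simp only [kExponent, neg_mul_qc_zpow hp]

lemma PK_mul_PKinv (hp : p ≠ 0) (ha : a ≠ 0) : PK p s a * PKinv p s a = 1 := by
  rw [PK_eq_diagonal hp, PKinv_eq_diagonal hp, diagonal_mul_diagonal, ← diagonal_one]
  exact congrArg diagonal <| funext fun i =>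
    mul_inv_cancel₀ (mul_ne_zero ha (zpow_ne_zero _ (qc_ne_zero p)))

lemma PK_pow_two_mul (hp : p ≠ 0) (ha : a = 1 ∨ a = -1) : PK p s a ^ (2 * p) = 1 := by
  have ha2 : a ^ 2 = 1 := by rcases ha with rfl | rfl <;> norm_num
  rw [PK_eq_diagonal hp, diagonal_pow, ← diagonal_one]
  refine congrArg diagonal <| funext fun i => ?_
  rw [Pi.pow_apply, mul_pow, pow_mul, ha2, one_pow, one_mul, ← zpow_natCast, ← _root_.zpow_mul,
    mul_comm, _root_.zpow_mul, zpow_natCast, qc_pow_two_mul_self hp, _root_.one_zpow]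

lemma kExponent_modEq_of_PE_ne_zero {i j : PIdx p s} (h : PE p s a i j ≠ 0) :
    kExponent p s i ≡ kExponent p s j + 2 [ZMOD 2 * p] := by
  rw [Int.modEq_iff_dvd]
  rcases i with (m | m) | (m | m) <;> rcases j with (n | n) | (n | n) <;>
    simp only [PE, of_apply, ne_eq, ite_eq_right_iff, Classical.not_imp,
      not_true_eq_false] at h <;>
    simp only [kExponent] <;> have := m.isLt <;> have := n.isLt <;>
    first | exact ⟨0, by omega⟩ | exact ⟨1, by omega⟩

lemma kExponent_modEq_of_PF_ne_zero {i j : PIdx p s} (h : PF p s i j ≠ 0) :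
    kExponent p s i + 2 ≡ kExponent p s j [ZMOD 2 * p] := by
  rw [Int.modEq_iff_dvd]
  rcases i with (m | m) | (m | m) <;> rcases j with (n | n) | (n | n) <;>
    simp only [PF, of_apply, ne_eq, ite_eq_right_iff, Classical.not_imp,
      not_true_eq_false] at h <;>
    simp only [kExponent] <;> have := m.isLt <;> have := n.isLt <;>
    first | exact ⟨0, by omega⟩ | exact ⟨-1, by omega⟩

lemma PK_mul_PE_mul_PKinv (hp : p ≠ 0) (ha : a ≠ 0) :
    PK p s a * PE p s a * PKinv p s a = (qc p ^ 2) • PE p s a := by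
  rw [PK_eq_diagonal hp, PKinv_eq_diagonal hp]
  refine diagonal_mul_mul_diagonal_inv _ _ _
    (fun i => mul_ne_zero ha (zpow_ne_zero _ (qc_ne_zero p))) fun i j hij => ?_
  rw [qc_zpow_eq_of_modEq hp (kExponent_modEq_of_PE_ne_zero hij), zpow_add₀ (qc_ne_zero p)]
  norm_cast
  ring

lemma PK_mul_PF_mul_PKinv (hp : p ≠ 0) (ha : a ≠ 0) :
    PK p s a * PF p s * PKinv p s a = (qc p ^ 2)⁻¹ • PF p s := by
  rw [PK_eq_diagonal hp, PKinv_eq_diagonal hp]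
  refine diagonal_mul_mul_diagonal_inv _ _ _
    (fun i => mul_ne_zero ha (zpow_ne_zero _ (qc_ne_zero p))) fun i j hij => ?_
  rw [← qc_zpow_eq_of_modEq hp (kExponent_modEq_of_PF_ne_zero hij), zpow_add₀ (qc_ne_zero p)]
  have := qc_ne_zero p
  norm_cast
  field_simp

def eGrade (p s : ℕ) : PIdx p s → ℕ
  | Sum.inl (Sum.inl n) => n
  | Sum.inl (Sum.inr n) => p - s + n
  | Sum.inr (Sum.inl k) => k
  | Sum.inr (Sum.inr k) => s + k

def fGrade (p s : ℕ) : PIdx p s → ℕ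
  | Sum.inl (Sum.inl n) => s - 1 - n
  | Sum.inl (Sum.inr n) => p - 1 - n
  | Sum.inr (Sum.inl k) => p - 1 - k
  | Sum.inr (Sum.inr k) => p - s - 1 - k

lemma PE_pow_eq_zero (hsp : s ≤ p) : PE p s a ^ p = 0 := by
  refine pow_eq_zero_of_weight_lt _ (eGrade p s) (fun i => ?_) fun i j h => ?_
  · rcases i with (n | n) | (n | n) <;> simp only [eGrade] <;> omega
  · rcases i with (m | m) | (m | m) <;> rcases j with (n | n) | (n | n) <;>
      simp only [PE, of_apply, ne_eq, ite_eq_right_iff, Classical.not_imp,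
        not_true_eq_false] at h <;>
      simp only [eGrade] <;> omega

lemma PF_pow_eq_zero (hsp : s ≤ p) : PF p s ^ p = 0 := by
  refine pow_eq_zero_of_weight_lt _ (fGrade p s) (fun i => ?_) fun i j h => ?_
  · rcases i with (n | n) | (n | n) <;> simp only [fGrade] <;> omega
  · rcases i with (m | m) | (m | m) <;> rcases j with (n | n) | (n | n) <;>
      simp only [PF, of_apply, ne_eq, ite_eq_right_iff, Classical.not_imp,
        not_true_eq_false] at h <;>
      simp only [fGrade] <;> omega

lemma smul_PK_sub_PKinv (hp : p ≠ 0) (ha : a = 1 ∨ a = -1) :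
    (qc p - (qc p)⁻¹)⁻¹ • (PK p s a - PKinv p s a) =
      diagonal fun i => a * qNum (qc p) (kExponent p s i) := by
  rw [PK_eq_diagonal hp, PKinv_eq_diagonal hp, diagonal_sub, ← diagonal_smul]
  exact congrArg diagonal <| funext fun i => by
    rw [Pi.smul_apply, smul_eq_mul, inv_mul_eq_div, sub_inv_div_eq_mul_qNum _ ha]

lemma PE_mul_PF_sub_PF_mul_PE (hp : p ≠ 0) (hsp : s < p) :
    PE p s a * PF p s - PF p s * PE p s a =
      diagonal fun i => a * qNum (qc p) (kExponent p s i) := by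
  ext i j
  rcases i with (m | m) | (m | m) <;> rcases j with (n | n) | (n | n) <;>
    simp only [Matrix.sub_apply, mul_apply, Fintype.sum_sum_type, PF, of_apply, mul_ite, ite_mul,
      mul_one, one_mul, mul_zero, zero_mul, ite_and, Finset.sum_ite_irrel, Finset.sum_const_zero,
      add_zero, zero_add, Fin.sum_ite_val_eq, Fin.sum_ite_val_eq_val_add_one] <;>
    simp only [PE, of_apply, diagonal_apply, Sum.inl.injEq, Sum.inr.injEq, reduceCtorEq,
      ite_self, dite_eq_ite, and_true, true_and, false_and, add_zero, zero_add, zero_sub, if_false,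
      sub_self, kExponent, add_left_inj]
  case inl.inl.inl.inl => exact raise_lower_commutator_apply p a m n
  case inl.inr.inl.inr => exact raise_lower_commutator_apply p a m n
  case inr.inl.inr.inl =>
    simpa [qNum_natCast_add_self hp] using raise_lower_commutator_apply p (-a) m n
  case inr.inr.inr.inr =>
    simpa [qNum_natCast_add_self hp] using raise_lower_commutator_apply p (-a) m n
  -- the remaining blocks only see the gluing maps, whose contributions cancel
  all_goals
    have := m.isLt
    have := n.isLt
    split_ifs <;> first | omega | norm_num

end ProjectiveModule

theorem projective_module_well_defined_general (p s : ℕ) (hp : 2 ≤ p)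
    (hsp : s ≤ p - 1) (a : ℂ) (ha : a = 1 ∨ a = -1) :
    PK p s a * PKinv p s a = 1 ∧
    PE p s a ^ p = 0 ∧
    PF p s ^ p = 0 ∧
    PK p s a ^ (2 * p) = 1 ∧
    PK p s a * PE p s a * PKinv p s a = (qc p ^ 2) • PE p s a ∧
    PK p s a * PF p s * PKinv p s a = ((qc p ^ 2)⁻¹) • PF p s ∧
    PE p s a * PF p s - PF p s * PE p s a =
      ((qc p - (qc p)⁻¹)⁻¹) • (PK p s a - PKinv p s a) := by
  have hp0 : p ≠ 0 := by omega
  have ha0 : a ≠ 0 := by rcases ha with rfl | rfl <;> norm_num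
  refine ⟨PK_mul_PKinv hp0 ha0, PE_pow_eq_zero (by omega), PF_pow_eq_zero (by omega),
    PK_pow_two_mul hp0 ha, PK_mul_PE_mul_PKinv hp0 ha0, PK_mul_PF_mul_PKinv hp0 ha0, ?_⟩
  rw [smul_PK_sub_PKinv hp0 ha]
  exact PE_mul_PF_sub_PF_mul_PE hp0 (by omega)

/-- for `1 ≤ s ≤ p−1` and `a = ±1`, the `2p`-dimensional module
`P^a_s` with the action given above is a well-defined `U_q(sl2)`-module: the
operators satisfy all the defining relations of `U_q(sl2)`. -/
theorem projective_module_well_defined (p s : ℕ) (hp : 2 ≤ p) (hs1 : 1 ≤ s)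
    (hsp : s ≤ p - 1) (a : ℂ) (ha : a = 1 ∨ a = -1) :
    PK p s a * PKinv p s a = 1 ∧
    PE p s a ^ p = 0 ∧
    PF p s ^ p = 0 ∧
    PK p s a ^ (2 * p) = 1 ∧
    PK p s a * PE p s a * PKinv p s a = (qc p ^ 2) • PE p s a ∧
    PK p s a * PF p s * PKinv p s a = ((qc p ^ 2)⁻¹) • PF p s ∧
    PE p s a * PF p s - PF p s * PE p s a =
      ((qc p - (qc p)⁻¹)⁻¹) • (PK p s a - PKinv p s a) :=
  projective_module_well_defined_general p s hp hsp a ha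
end
end
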